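/- arXiv:1707.09041 — 4 statements merged into one kernel-verified Lean document; each statement's English description precedes it below -/
import Mathlib

section
/- (Lemma 3.2 of the paper, Euclidean form.) Let J : ℂⁿ∖{0} → (ℂⁿ →L[ℝ] ℂⁿ) be a (1,1)-tensor field of class C¹ such that for every z ≠ 0: (i) J(z)(c·z) = i·c·z for all c ∈ ℂ (J agrees with multiplication by i on 𝒵_z = ℂ·z), and (ii) J(z)(𝓗_z) ⊆ 𝓗_z, where 𝓗_z = {v ∈ ℂⁿ : ⟨z, v⟩ = 0}. Then for all real vector fields X, Y of class C¹ on ℂⁿ∖{0} and every z ≠ 0, dd^c_J τ₀(X,Y)(z) = dd^c_{J_st} τ₀(X,Y)(z), where J_st(z) is multiplication by i. -/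
/-! The hypotheses force `⟪z, J(z) v⟫ = i ⟪z, v⟫` for every `v` (split `v` into its component
along `z` and a part in `z^⊥`), so the 1-forms `u ↦ dτ₀|_u ∘ J(u)` and `u ↦ dτ₀|_u ∘ J_st` coincide
on the neighbourhood `ℂⁿ∖{0}` of `z`, and `dd^c_J τ₀(X,Y)(z)` only depends on the germ of that
1-form at `z`. -/

noncomputable section

/-- The Euclidean space `ℂⁿ`. -/
abbrev En (n : ℕ) := EuclideanSpace ℂ (Fin n)

/-- The differential of `τ₀(z) = ‖z‖²`: `dτ₀|_z(v) = 2·Re⟨z, v⟩`. -/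
def dTau {n : ℕ} (z v : En n) : ℝ := 2 * (inner ℂ z v : ℂ).re

/-- Lie bracket of two `C¹` real vector fields: `[X,Y](z) = DY(z)[X(z)] − DX(z)[Y(z)]`. -/
def lieBracket {n : ℕ} (X Y : En n → En n) (z : En n) : En n :=
  fderiv ℝ Y z (X z) - fderiv ℝ X z (Y z)

/-- `dd^c_J τ₀(X,Y)(z)` for a (1,1)-tensor field `J` and real vector fields `X`, `Y`. -/
def ddcJ {n : ℕ} (J : En n → (En n →L[ℝ] En n)) (X Y : En n → En n) (z : En n) : ℝ :=
  - fderiv ℝ (fun u => dTau u (J u (Y u))) z (X z)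
  + fderiv ℝ (fun u => dTau u (J u (X u))) z (Y z)
  + dTau z (J z (lieBracket X Y z))

/-- The standard complex structure: multiplication by `i` at each point. -/
def Jstd (n : ℕ) : En n →L[ℝ] En n :=
  (Complex.I • ContinuousLinearMap.id ℂ (En n)).restrictScalars ℝ

open Filter Topology

theorem inner_apply_eq_I_mul_inner {E : Type*} [NormedAddCommGroup E] [InnerProductSpace ℂ E]
    (T : E →ₗ[ℝ] E) (u : E) (hZ : ∀ c : ℂ, T (c • u) = (Complex.I * c) • u)
    (hH : ∀ v : E, inner ℂ u v = 0 → inner ℂ u (T v) = 0) (v : E) :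
    inner ℂ u (T v) = Complex.I * inner ℂ u v := by
  set c : ℂ := inner ℂ u v / inner ℂ u u
  have hcu : inner ℂ u (c • u) = inner ℂ u v :=
    (inner_smul_right _ _ _).trans <| div_mul_cancel_of_imp fun h => by
      rw [inner_self_eq_zero.mp h, inner_zero_left]
  have hperp : inner ℂ u (v - c • u) = 0 := by rw [inner_sub_right, hcu, sub_self]
  calc inner ℂ u (T v) = inner ℂ u (T (c • u)) + inner ℂ u (T (v - c • u)) := by
        rw [← inner_add_right, ← map_add, add_sub_cancel]
    _ = Complex.I * inner ℂ u v := by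
        rw [hZ, hH _ hperp, add_zero, inner_smul_right, mul_assoc, ← inner_smul_right, hcu]

theorem ddcJ_congr {n : ℕ} {J J' : En n → (En n →L[ℝ] En n)} {z : En n}
    (h : ∀ᶠ u in 𝓝 z, ∀ v, dTau u (J u v) = dTau u (J' u v)) (X Y : En n → En n) :
    ddcJ J X Y z = ddcJ J' X Y z := by
  have hX : (fun u => dTau u (J u (X u))) =ᶠ[𝓝 z] fun u => dTau u (J' u (X u)) :=
    h.mono fun u hu => hu (X u)
  have hY : (fun u => dTau u (J u (Y u))) =ᶠ[𝓝 z] fun u => dTau u (J' u (Y u)) :=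
    h.mono fun u hu => hu (Y u)
  simp only [ddcJ, hX.fderiv_eq, hY.fderiv_eq, h.self_of_nhds]

theorem statement0_general (n : ℕ)
    (J : En n → (En n →L[ℝ] En n))
    (hJZ : ∀ z : En n, z ≠ 0 → ∀ c : ℂ, J z (c • z) = (Complex.I * c) • z)
    (hJH : ∀ z : En n, z ≠ 0 → ∀ v : En n, (inner ℂ z v : ℂ) = 0 → (inner ℂ z (J z v) : ℂ) = 0)
    (X Y : En n → En n)
    (z : En n) (hz : z ≠ 0) :
    ddcJ J X Y z = ddcJ (fun _ => Jstd n) X Y z := by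
  refine ddcJ_congr ?_ X Y
  filter_upwards [isOpen_compl_singleton.mem_nhds hz] with u (hu : u ≠ 0) v
  have hJ : inner ℂ u (J u v) = Complex.I * inner ℂ u v :=
    inner_apply_eq_I_mul_inner (J u).toLinearMap u (hJZ u hu) (hJH u hu) v
  have hJstd : inner ℂ u (Jstd n v) = Complex.I * inner ℂ u v := inner_smul_right _ _ _
  rw [dTau, dTau, hJ, hJstd]

/-- **Lemma 3.2 (Euclidean form).** If a `C¹` tensor field `J` on `ℂⁿ∖{0}` agrees with
multiplication by `i` on `𝒵_z = ℂ·z` and preserves `𝓗_z = z^⊥`, then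
`dd^c_J τ₀ = dd^c_{J_st} τ₀` on `ℂⁿ∖{0}`. -/
theorem statement0 (n : ℕ) (hn : 2 ≤ n)
    (J : En n → (En n →L[ℝ] En n))
    (hJC1 : ContDiffOn ℝ 1 J ({0}ᶜ : Set (En n)))
    (hJZ : ∀ z : En n, z ≠ 0 → ∀ c : ℂ, J z (c • z) = (Complex.I * c) • z)
    (hJH : ∀ z : En n, z ≠ 0 → ∀ v : En n, (inner ℂ z v : ℂ) = 0 → (inner ℂ z (J z v) : ℂ) = 0)
    (X Y : En n → En n)
    (hX : ContDiffOn ℝ 1 X ({0}ᶜ : Set (En n)))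
    (hY : ContDiffOn ℝ 1 Y ({0}ᶜ : Set (En n)))
    (z : En n) (hz : z ≠ 0) :
    ddcJ J X Y z = ddcJ (fun _ => Jstd n) X Y z :=
  statement0_general n J hJZ hJH X Y z hz

end
end

section
/- (Proposition 3.5 of the paper, coordinate form: the derivative of a push-forward family of complex-structure tensors equals minus the Lie derivative along the velocity field.) For every t ∈ I and x ∈ Ω', the map s ↦ J_s(x) is differentiable at s = t and d/ds J_s(x)|_{s=t} = D_xX(t,x) ∘ J_t(x) − J_t(x) ∘ D_xX(t,x) − D_x(J_t)(x)[X(t,x)], where D_x(J_t)(x)[X(t,x)] denotes the Fréchet derivative of the map x ↦ J_t(x) (with values in E →L[ℝ] E) applied to the vector X(t,x). -/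
/-!
Follow the flow line `s ↦ F(s, y)` through `x = F(t, y)`. Along it `G(s, F(s, y)) = y`, so the
push-forward is the conjugate `A(s) ∘ J(y) ∘ A(s)⁻¹` of the frozen tensor `J(y)` by
`A(s) = D_yF(s, y)`, whose derivative is the commutator `[A'(t) A(t)⁻¹, J_t(x)]`. By symmetry of
the mixed partials of `F`, `A'(t) = D_y ∂_sF(t, y) = D_xX(t, x) ∘ A(t)`. Finally the chain rule
splits the derivative along the flow line into `∂_s J_s(x) + D_x J_t(x)[X(t, x)]`.
-/

open ContinuousLinearMap Filter Topology

section Curried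

variable {E E' : Type*} [NormedAddCommGroup E] [NormedSpace ℝ E]
  [NormedAddCommGroup E'] [NormedSpace ℝ E'] {F : ℝ → E → E'} {t : ℝ} {y : E}

theorem DifferentiableAt.hasFDerivAt_curry
    (h : DifferentiableAt ℝ (fun p : ℝ × E => F p.1 p.2) (t, y)) :
    HasFDerivAt (F t) ((fderiv ℝ (fun p : ℝ × E => F p.1 p.2) (t, y)).comp (inr ℝ ℝ E)) y :=
  h.hasFDerivAt.comp y (hasFDerivAt_prodMk_right t y)

theorem DifferentiableAt.hasDerivAt_curry
    (h : DifferentiableAt ℝ (fun p : ℝ × E => F p.1 p.2) (t, y)) :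
    HasDerivAt (fun s => F s y) (fderiv ℝ (fun p : ℝ × E => F p.1 p.2) (t, y) (1, 0)) t :=
  h.hasFDerivAt.comp_hasDerivAt (l := fun p : ℝ × E => F p.1 p.2) t
    ((hasDerivAt_id t).prodMk (hasDerivAt_const t y))

theorem ContDiffAt.fderiv_curry_eventuallyEq
    (hF : ContDiffAt ℝ 2 (fun p : ℝ × E => F p.1 p.2) (t, y)) :
    (fun p : ℝ × E => fderiv ℝ (F p.1) p.2) =ᶠ[𝓝 (t, y)]
      fun p => fderiv ℝ (fun p : ℝ × E => F p.1 p.2) p ∘L inr ℝ ℝ E := by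
  filter_upwards [hF.eventually (by simp)] with p hp
  exact (hp.differentiableAt two_ne_zero).hasFDerivAt_curry.fderiv

theorem ContDiffAt.deriv_curry_eventuallyEq
    (hF : ContDiffAt ℝ 2 (fun p : ℝ × E => F p.1 p.2) (t, y)) :
    (fun y' => deriv (fun s => F s y') t) =ᶠ[𝓝 y]
      fun y' => fderiv ℝ (fun p : ℝ × E => F p.1 p.2) (t, y') (1, 0) := by
  have hc : Tendsto (fun y' : E => (t, y')) (𝓝 y) (𝓝 (t, y)) :=
    (continuous_const.prodMk continuous_id).tendsto' y (t, y) rfl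
  filter_upwards [hc.eventually (hF.eventually (by simp))] with y' hy'
  exact (hy'.differentiableAt two_ne_zero).hasDerivAt_curry.deriv

theorem ContDiffAt.differentiableAt_fderiv_curry
    (hF : ContDiffAt ℝ 2 (fun p : ℝ × E => F p.1 p.2) (t, y)) :
    DifferentiableAt ℝ (fun p : ℝ × E => fderiv ℝ (F p.1) p.2) (t, y) :=
  (((hF.fderiv_right (m := 1) le_rfl).differentiableAt one_ne_zero).clm_comp
    (differentiableAt_const (inr ℝ ℝ E))).congr_of_eventuallyEq hF.fderiv_curry_eventuallyEq

theorem ContDiffAt.differentiableAt_deriv_curry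
    (hF : ContDiffAt ℝ 2 (fun p : ℝ × E => F p.1 p.2) (t, y)) :
    DifferentiableAt ℝ (fun y' => deriv (fun s => F s y') t) y :=
  ((((hF.fderiv_right (m := 1) le_rfl).differentiableAt one_ne_zero).comp y
    ((differentiableAt_const t).prodMk differentiableAt_id)).clm_apply
      (differentiableAt_const _)).congr_of_eventuallyEq hF.deriv_curry_eventuallyEq

theorem ContDiffAt.hasDerivAt_fderiv_curry
    (hF : ContDiffAt ℝ 2 (fun p : ℝ × E => F p.1 p.2) (t, y)) :
    HasDerivAt (fun s => fderiv ℝ (F s) y)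
      (fderiv ℝ (fun y' => deriv (fun s => F s y') t) y) t := by
  set f : ℝ × E → E' := fun p => F p.1 p.2
  have hD : HasFDerivAt (fderiv ℝ f) (fderiv ℝ (fderiv ℝ f) (t, y)) (t, y) :=
    ((hF.fderiv_right (m := 1) le_rfl).differentiableAt one_ne_zero).hasFDerivAt
  have hs : HasDerivAt (fun s => fderiv ℝ f (s, y) ∘L inr ℝ ℝ E)
      (fderiv ℝ (fderiv ℝ f) (t, y) (1, 0) ∘L inr ℝ ℝ E) t := by
    simpa using (hD.comp_hasDerivAt (l := fderiv ℝ f) t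
      ((hasDerivAt_id t).prodMk (hasDerivAt_const t y))).clm_comp (hasDerivAt_const t (inr ℝ ℝ E))
  have hy' : HasFDerivAt (fun y' => fderiv ℝ f (t, y') (1, 0))
      ((fderiv ℝ (fderiv ℝ f) (t, y) ∘L inr ℝ ℝ E).flip (1, 0)) y := by
    simpa using (hD.comp y (hasFDerivAt_prodMk_right t y)).clm_apply (hasFDerivAt_const (1, 0) y)
  have hsymm : IsSymmSndFDerivAt ℝ f (t, y) := hF.isSymmSndFDerivAt (by simp)
  have hmixed : (fderiv ℝ (fderiv ℝ f) (t, y) ∘L inr ℝ ℝ E).flip (1, 0)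
      = fderiv ℝ (fderiv ℝ f) (t, y) (1, 0) ∘L inr ℝ ℝ E := by
    ext w
    simp [hsymm (1, 0) (0, w)]
  rw [hF.deriv_curry_eventuallyEq.fderiv_eq, hy'.fderiv, hmixed]
  exact hs.congr_of_eventuallyEq (hF.fderiv_curry_eventuallyEq.comp_tendsto
    ((continuous_id.prodMk continuous_const).tendsto' t (t, y) rfl))

end Curried

theorem fderiv_comp_fderiv_eq_id_of_leftInverse {𝕜 E E' : Type*} [NontriviallyNormedField 𝕜]
    [NormedAddCommGroup E] [NormedSpace 𝕜 E] [NormedAddCommGroup E'] [NormedSpace 𝕜 E']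
    {f : E → E'} {g : E' → E} {y : E} (hf : DifferentiableAt 𝕜 f y)
    (hg : DifferentiableAt 𝕜 g (f y)) (hgf : g ∘ f =ᶠ[𝓝 y] id) :
    fderiv 𝕜 g (f y) ∘L fderiv 𝕜 f y = ContinuousLinearMap.id 𝕜 E := by
  rw [← fderiv_comp y hg hf, hgf.fderiv_eq, fderiv_id]

theorem HasDerivAt.conjugate {𝕜 R : Type*} [NontriviallyNormedField 𝕜] [NormedRing R]
    [NormedAlgebra 𝕜 R] {a b : 𝕜 → R} {a' : R} {t : 𝕜} (ha : HasDerivAt a a' t)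
    (hb : DifferentiableAt 𝕜 b t) (hba : ∀ᶠ s in 𝓝 t, b s * a s = 1) (hab : a t * b t = 1)
    (m : R) :
    HasDerivAt (fun s => a s * (m * b s))
      (a' * b t * (a t * (m * b t)) - a t * (m * b t) * (a' * b t)) t := by
  obtain ⟨b', hb'⟩ : ∃ b', HasDerivAt b b' t := ⟨_, hb.hasDerivAt⟩
  have hbat : b t * a t = 1 := hba.self_of_nhds
  have hprod : b' * a t + b t * a' = 0 :=
    (hb'.fun_mul ha).unique ((hasDerivAt_const t (1 : R)).congr_of_eventuallyEq hba)
  have hb'_eq : b' = -(b t * a' * b t) := by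
    calc b' = (b' * a t + b t * a') * b t - b t * a' * b t := by
          rw [add_mul, mul_assoc b', hab]; noncomm_ring
      _ = -(b t * a' * b t) := by rw [hprod]; noncomm_ring
  refine (ha.fun_mul ((hasDerivAt_const t m).fun_mul hb')).congr_deriv ?_
  rw [hb'_eq, show a' * b t * (a t * (m * b t)) = a' * (b t * a t) * (m * b t) by noncomm_ring,
    hbat]
  noncomm_ring

theorem hasDerivAt_curry_of_hasDerivAt_along {E W : Type*} [NormedAddCommGroup E]
    [NormedSpace ℝ E] [NormedAddCommGroup W] [NormedSpace ℝ W] {Φ : ℝ → E → W} {c : ℝ → E}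
    {t : ℝ} {x v : E} {L : W} (hΦ : DifferentiableAt ℝ (fun p : ℝ × E => Φ p.1 p.2) (t, x))
    (hc : HasDerivAt c v t) (hct : c t = x) (hL : HasDerivAt (fun s => Φ s (c s)) L t) :
    HasDerivAt (fun s => Φ s x) (L - fderiv ℝ (Φ t) x v) t := by
  subst hct
  have hcurve := hΦ.hasFDerivAt.comp_hasDerivAt (l := fun p : ℝ × E => Φ p.1 p.2) t
    ((hasDerivAt_id t).prodMk hc)
  rw [hL.unique hcurve, (DifferentiableAt.hasFDerivAt_curry hΦ).fderiv]
  convert DifferentiableAt.hasDerivAt_curry hΦ using 1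
  rw [comp_apply, ← map_sub]
  simp

section Pushforward

variable {E : Type*} [NormedAddCommGroup E] [NormedSpace ℝ E]

noncomputable def pushforwardField (F G : ℝ → E → E) (J : E → E →L[ℝ] E) (t : ℝ) (x : E) :
    E →L[ℝ] E :=
  (fderiv ℝ (F t) (G t x)).comp ((J (G t x)).comp (fderiv ℝ (G t) x))

noncomputable def velocityField (F G : ℝ → E → E) (t : ℝ) (x : E) : E :=
  deriv (fun s => F s (G t x)) t

variable {F G : ℝ → E → E} {J : E → E →L[ℝ] E} {t : ℝ} {y : E}

theorem differentiableAt_pushforwardField {x : E}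
    (hF : ContDiffAt ℝ 2 (fun p : ℝ × E => F p.1 p.2) (t, G t x))
    (hG : ContDiffAt ℝ 2 (fun p : ℝ × E => G p.1 p.2) (t, x))
    (hJ : DifferentiableAt ℝ J (G t x)) :
    DifferentiableAt ℝ (fun p : ℝ × E => pushforwardField F G J p.1 p.2) (t, x) := by
  have hg : DifferentiableAt ℝ (fun p : ℝ × E => G p.1 p.2) (t, x) :=
    hG.differentiableAt two_ne_zero
  exact (hF.differentiableAt_fderiv_curry.comp (t, x) (differentiableAt_fst.prodMk hg)).clm_comp
    ((hJ.comp (t, x) hg).clm_comp hG.differentiableAt_fderiv_curry)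

theorem hasDerivAt_flowLine (hF : DifferentiableAt ℝ (fun p : ℝ × E => F p.1 p.2) (t, y))
    (hGF : G t (F t y) = y) :
    HasDerivAt (fun s => F s y) (velocityField F G t (F t y)) t := by
  rw [velocityField, hGF]
  exact hF.hasDerivAt_curry.differentiableAt.hasDerivAt

theorem eventually_fderiv_mul_fderiv_eq_one_along_flowLine
    (hF : ContDiffAt ℝ 2 (fun p : ℝ × E => F p.1 p.2) (t, y))
    (hG : ContDiffAt ℝ 2 (fun p : ℝ × E => G p.1 p.2) (t, F t y))
    (hGF : ∀ᶠ p in 𝓝 (t, y), G p.1 (F p.1 p.2) = p.2) :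
    ∀ᶠ s in 𝓝 t, fderiv ℝ (G s) (F s y) * fderiv ℝ (F s) y = 1 := by
  have hfiber : Tendsto (fun s => (s, y)) (𝓝 t) (𝓝 (t, y)) :=
    (continuous_id.prodMk continuous_const).tendsto t
  have hflow : ContinuousAt (fun s => (s, F s y)) t :=
    continuousAt_id.prodMk (hF.differentiableAt two_ne_zero).hasDerivAt_curry.continuousAt
  have hFd : ∀ᶠ s in 𝓝 t, DifferentiableAt ℝ (F s) y := by
    filter_upwards [hfiber.eventually (hF.eventually (by simp))] with s hs
    exact (hs.differentiableAt two_ne_zero).hasFDerivAt_curry.differentiableAt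
  have hGd : ∀ᶠ s in 𝓝 t, DifferentiableAt ℝ (G s) (F s y) := by
    filter_upwards [hflow.tendsto.eventually (hG.eventually (by simp))] with s hs
    exact (hs.differentiableAt two_ne_zero).hasFDerivAt_curry.differentiableAt
  filter_upwards [hFd, hGd, hGF.curry_nhds] with s hFs hGs hGFs
  exact fderiv_comp_fderiv_eq_id_of_leftInverse hFs hGs hGFs

theorem hasDerivAt_pushforwardField_along_flowLine
    (hF : ContDiffAt ℝ 2 (fun p : ℝ × E => F p.1 p.2) (t, y))
    (hG : ContDiffAt ℝ 2 (fun p : ℝ × E => G p.1 p.2) (t, F t y))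
    (hGF : ∀ᶠ p in 𝓝 (t, y), G p.1 (F p.1 p.2) = p.2)
    (hFG : F t ∘ G t =ᶠ[𝓝 (F t y)] id) :
    HasDerivAt (fun s => pushforwardField F G J s (F s y))
      ((fderiv ℝ (velocityField F G t) (F t y)).comp (pushforwardField F G J t (F t y))
        - (pushforwardField F G J t (F t y)).comp (fderiv ℝ (velocityField F G t) (F t y))) t := by
  set A : ℝ → E →L[ℝ] E := fun s => fderiv ℝ (F s) y
  set B : ℝ → E →L[ℝ] E := fun s => fderiv ℝ (G s) (F s y)
  have hGFy : G t (F t y) = y := hGF.self_of_nhds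
  have hGd : DifferentiableAt ℝ (G t) (F t y) :=
    (hG.differentiableAt two_ne_zero).hasFDerivAt_curry.differentiableAt
  have hAB : A t * B t = 1 := by
    have hFd : DifferentiableAt ℝ (F t) (G t (F t y)) := by
      rw [hGFy]
      exact (hF.differentiableAt two_ne_zero).hasFDerivAt_curry.differentiableAt
    have h := fderiv_comp_fderiv_eq_id_of_leftInverse hGd hFd hFG
    rwa [hGFy] at h
  have hB : DifferentiableAt ℝ B t :=
    DifferentiableAt.comp (g := fun p : ℝ × E => fderiv ℝ (G p.1) p.2) t
      hG.differentiableAt_fderiv_curry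
      (differentiableAt_id.prodMk
        (hF.differentiableAt two_ne_zero).hasDerivAt_curry.differentiableAt)
  have hpush : (fun s => pushforwardField F G J s (F s y)) =ᶠ[𝓝 t]
      fun s => A s * (J y * B s) := by
    have hfiber : Tendsto (fun s => (s, y)) (𝓝 t) (𝓝 (t, y)) :=
      (continuous_id.prodMk continuous_const).tendsto t
    filter_upwards [hfiber.eventually hGF] with s hs
    rw [pushforwardField, hs]
    rfl
  have hvel : fderiv ℝ (velocityField F G t) (F t y)
      = fderiv ℝ (fun y' => deriv (fun s => F s y') t) y * B t := by
    have hdF : DifferentiableAt ℝ (fun y' => deriv (fun s => F s y') t) (G t (F t y)) := by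
      rw [hGFy]
      exact hF.differentiableAt_deriv_curry
    rw [show velocityField F G t = (fun y' => deriv (fun s => F s y') t) ∘ G t from rfl,
      fderiv_comp _ hdF hGd, hGFy]
    rfl
  have hJt : pushforwardField F G J t (F t y) = A t * (J y * B t) := hpush.self_of_nhds
  rw [hvel, hJt]
  exact (hF.hasDerivAt_fderiv_curry.conjugate hB
    (eventually_fderiv_mul_fderiv_eq_one_along_flowLine hF hG hGF) hAB (J y)).congr_of_eventuallyEq
    hpush

end Pushforward

theorem statement1_general {E : Type*} [NormedAddCommGroup E] [NormedSpace ℝ E]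
    (a b : ℝ) (Ω Ω' : Set E) (hΩ : IsOpen Ω) (hΩ' : IsOpen Ω')
    (F G : ℝ → E → E)
    (hF : ContDiffOn ℝ 2 (fun p : ℝ × E => F p.1 p.2) (Set.Ioo a b ×ˢ Ω))
    (hG : ContDiffOn ℝ 2 (fun p : ℝ × E => G p.1 p.2) (Set.Ioo a b ×ˢ Ω'))
    (hGmem : ∀ t ∈ Set.Ioo a b, ∀ x ∈ Ω', G t x ∈ Ω)
    (hGF : ∀ t ∈ Set.Ioo a b, ∀ y ∈ Ω, G t (F t y) = y)
    (hFG : ∀ t ∈ Set.Ioo a b, ∀ x ∈ Ω', F t (G t x) = x)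
    (J : E → (E →L[ℝ] E)) (hJ : ContDiffOn ℝ 1 J Ω)
    (Jfam : ℝ → E → (E →L[ℝ] E))
    (hJfam : ∀ t, ∀ x,
      Jfam t x = (fderiv ℝ (F t) (G t x)).comp ((J (G t x)).comp (fderiv ℝ (G t) x)))
    (X : ℝ → E → E)
    (hX : ∀ t, ∀ x, X t x = deriv (fun s => F s (G t x)) t)
    (t : ℝ) (ht : t ∈ Set.Ioo a b) (x : E) (hx : x ∈ Ω') :
    HasDerivAt (fun s => Jfam s x)
      ((fderiv ℝ (X t) x).comp (Jfam t x) - (Jfam t x).comp (fderiv ℝ (X t) x)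
        - fderiv ℝ (fun x' => Jfam t x') x (X t x)) t := by
  obtain rfl : Jfam = pushforwardField F G J := funext fun s => funext (hJfam s)
  obtain rfl : X = velocityField F G := funext fun s => funext (hX s)
  obtain ⟨y, hy, rfl⟩ : ∃ y ∈ Ω, F t y = x := ⟨G t x, hGmem t ht x hx, hFG t ht x hx⟩
  have hGFy : G t (F t y) = y := hGF t ht y hy
  have hFC : ContDiffAt ℝ 2 (fun p : ℝ × E => F p.1 p.2) (t, y) :=
    hF.contDiffAt ((isOpen_Ioo.prod hΩ).mem_nhds ⟨ht, hy⟩)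
  have hGC : ContDiffAt ℝ 2 (fun p : ℝ × E => G p.1 p.2) (t, F t y) :=
    hG.contDiffAt ((isOpen_Ioo.prod hΩ').mem_nhds ⟨ht, hx⟩)
  have hJy : DifferentiableAt ℝ J y :=
    (hJ.differentiableOn one_ne_zero).differentiableAt (hΩ.mem_nhds hy)
  have hGF_loc : ∀ᶠ p in 𝓝 (t, y), G p.1 (F p.1 p.2) = p.2 := by
    filter_upwards [(isOpen_Ioo.prod hΩ).mem_nhds ⟨ht, hy⟩] with p hp using hGF p.1 hp.1 p.2 hp.2
  have hFG_loc : F t ∘ G t =ᶠ[𝓝 (F t y)] id := by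
    filter_upwards [hΩ'.mem_nhds hx] with x' hx' using hFG t ht x' hx'
  exact hasDerivAt_curry_of_hasDerivAt_along
    (differentiableAt_pushforwardField (by rwa [hGFy]) hGC (by rwa [hGFy]))
    (hasDerivAt_flowLine (hFC.differentiableAt two_ne_zero) hGFy) rfl
    (hasDerivAt_pushforwardField_along_flowLine hFC hGC hGF_loc hFG_loc)

/-- **Proposition 3.5 (coordinate form).** If `J_t = D_yF(t,G(t,·)) ∘ J ∘ D_xG(t,·)` is the
push-forward family of complex-structure tensors of a `C¹` tensor field `J` along a `C²` family
of diffeomorphisms `F(t,·) : Ω → Ω'` with inverses `G(t,·)`, and `X(t,x) = d/ds F(s,G(t,x))|_{s=t}`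
is the velocity field, then for `t ∈ I` and `x ∈ Ω'` the map `s ↦ J_s(x)` is differentiable at
`s = t` with derivative `D_xX(t,·)|_x ∘ J_t(x) − J_t(x) ∘ D_xX(t,·)|_x − D_x(J_t)(x)[X(t,x)]`,
i.e. minus the Lie derivative of `J_t` along `X_t`. -/
theorem statement1 {E : Type*} [NormedAddCommGroup E] [NormedSpace ℝ E] [CompleteSpace E]
    (a b : ℝ) (Ω Ω' : Set E) (hΩ : IsOpen Ω) (hΩ' : IsOpen Ω')
    (F G : ℝ → E → E)
    (hF : ContDiffOn ℝ 2 (fun p : ℝ × E => F p.1 p.2) (Set.Ioo a b ×ˢ Ω))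
    (hG : ContDiffOn ℝ 2 (fun p : ℝ × E => G p.1 p.2) (Set.Ioo a b ×ˢ Ω'))
    (hFmem : ∀ t ∈ Set.Ioo a b, ∀ y ∈ Ω, F t y ∈ Ω')
    (hGmem : ∀ t ∈ Set.Ioo a b, ∀ x ∈ Ω', G t x ∈ Ω)
    (hGF : ∀ t ∈ Set.Ioo a b, ∀ y ∈ Ω, G t (F t y) = y)
    (hFG : ∀ t ∈ Set.Ioo a b, ∀ x ∈ Ω', F t (G t x) = x)
    (J : E → (E →L[ℝ] E)) (hJ : ContDiffOn ℝ 1 J Ω)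
    (Jfam : ℝ → E → (E →L[ℝ] E))
    (hJfam : ∀ t, ∀ x,
      Jfam t x = (fderiv ℝ (F t) (G t x)).comp ((J (G t x)).comp (fderiv ℝ (G t) x)))
    (X : ℝ → E → E)
    (hX : ∀ t, ∀ x, X t x = deriv (fun s => F s (G t x)) t)
    (t : ℝ) (ht : t ∈ Set.Ioo a b) (x : E) (hx : x ∈ Ω') :
    HasDerivAt (fun s => Jfam s x)
      ((fderiv ℝ (X t) x).comp (Jfam t x) - (Jfam t x).comp (fderiv ℝ (X t) x)
        - fderiv ℝ (fun x' => Jfam t x') x (X t x)) t :=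
  statement1_general a b Ω Ω' hΩ hΩ' F G hF hG hGmem hGF hFG J hJ Jfam hJfam X hX t ht x hx
end

section
/- (Boundary-value lemma from the proof of Lemma 4.1.) Let a : ℂ → ℂ be holomorphic on Δ∖{0} and continuous on Δ̄∖{0}. Assume that the function ζ ↦ ζ·a(ζ) has a finite limit as ζ → 0, and that Re(a(ζ)) = 0 for every ζ with |ζ| = 1. Then there exist λ ∈ ℂ and κ ∈ ℝ such that a(ζ) = λ/ζ + i·κ − λ̄·ζ for all ζ ∈ Δ̄∖{0}. -/
/-!
Subtracting the principal part `L / ζ` at the removable singularity, together with its reflection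
`conj L * ζ` in the unit circle, leaves a function `F` that is holomorphic on the disc, continuous
up to the boundary, and purely imaginary on the circle (there `1 / ζ = conj ζ`). The maximum
principle for `exp (± F)` makes `Re F` vanish on the whole disc, and then the open mapping theorem
forces `F` to be a constant `i κ`.
-/

open Metric Set Filter Topology Function ComplexConjugate Bornology

theorem ContinuousOn.of_sdiff_singleton_of_continuousAt {X Y : Type*} [TopologicalSpace X]
    [T1Space X] [TopologicalSpace Y] {f : X → Y} {s : Set X} {c : X}
    (hf : ContinuousOn f (s \ {c})) (hc : ContinuousAt f c) : ContinuousOn f s := by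
  intro x hx
  rcases eq_or_ne x c with rfl | hxc
  · exact hc.continuousWithinAt
  · exact continuousWithinAt_sdiff_singleton.1 (hf x ⟨hx, hxc⟩)

namespace Complex

variable {E : Type*} [NormedAddCommGroup E] [NormedSpace ℂ E]

theorem exists_differentiableOn_eq_sub_inv_smul_of_tendsto [CompleteSpace E] {f : ℂ → E}
    {s : Set ℂ} {c : ℂ} {L : E} (hs : s ∈ 𝓝 c) (hf : DifferentiableOn ℂ f (s \ {c}))
    (hL : Tendsto (fun z => (z - c) • f z) (𝓝[≠] c) (𝓝 L)) :
    ∃ g : ℂ → E, DifferentiableOn ℂ g s ∧ ∀ z ≠ c, g z = f z - (z - c)⁻¹ • L := by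
  classical
  set q : ℂ → E := update (fun z => (z - c) • f z) c L
  have hq : DifferentiableOn ℂ q s := by
    refine (differentiableOn_compl_singleton_and_continuousAt_iff hs).1 ⟨?_, ?_⟩
    · exact ((differentiableOn_id.sub_const c).smul hf).congr fun z hz => update_of_ne hz.2 _ _
    · exact continuousAt_update_same.2 hL
  refine ⟨dslope q c, (differentiableOn_dslope hs).2 hq, fun z hz => ?_⟩
  simp only [dslope_of_ne _ hz, slope_def_module, q]
  rw [update_of_ne hz, update_self, smul_sub, smul_smul,
    inv_mul_cancel₀ (sub_ne_zero.2 hz), one_smul]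

theorem re_eq_zero_of_diffContOnCl {F : E → ℂ} {U : Set E} [Nontrivial E] (hU : IsBounded U)
    (hF : DiffContOnCl ℂ F U) (hre : ∀ z ∈ frontier U, (F z).re = 0) {z : E}
    (hz : z ∈ closure U) : (F z).re = 0 := by
  have hle : ∀ G : E → ℂ, DiffContOnCl ℂ G U → (∀ w ∈ frontier U, (G w).re = 0) → (G z).re ≤ 0 :=
    fun G hG hGre => by
      have := norm_le_of_forall_mem_frontier_norm_le hU
        ⟨hG.differentiableOn.cexp, hG.continuousOn.cexp⟩
        (fun w hw => by rw [norm_exp, hGre w hw, Real.exp_zero]) hz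
      rwa [norm_exp, Real.exp_le_one_iff] at this
  have hneg := hle (-F) hF.neg (fun w hw => by simp [hre w hw])
  simp only [Pi.neg_apply, neg_re, neg_nonpos] at hneg
  exact le_antisymm (hle F hF hre) hneg

theorem exists_eqOn_const_ofReal_mul_I_of_re_eq_zero {F : ℂ → ℂ} {U : Set ℂ} (hU : IsOpen U)
    (hUc : IsPreconnected U) (hF : DifferentiableOn ℂ F U) (hre : ∀ z ∈ U, (F z).re = 0) :
    ∃ κ : ℝ, EqOn F (fun _ => κ * I) U := by
  rcases U.eq_empty_or_nonempty with rfl | ⟨z₀, hz₀⟩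
  · exact ⟨0, fun z hz => hz.elim⟩
  rcases (hF.analyticOnNhd hU).is_constant_or_isOpen hUc with ⟨w, hw⟩ | hopen
  · refine ⟨w.im, fun z hz => ?_⟩
    have hw0 : w.re = 0 := hw z₀ hz₀ ▸ hre z₀ hz₀
    rw [hw z hz]
    exact ext (by simp [hw0]) (by simp)
  · -- the image `F '' U` would be a nonempty open subset of the imaginary axis
    have hsub : F '' U ⊆ interior (re ⁻¹' {0}) :=
      (hopen U subset_rfl hU).subset_interior_iff.2 (image_subset_iff.2 hre)
    rw [interior_preimage_re, interior_singleton, preimage_empty] at hsub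
    exact absurd (hsub (mem_image_of_mem F hz₀)) (notMem_empty _)

theorem exists_eqOn_closure_const_ofReal_mul_I_of_re_eq_zero_on_frontier {F : ℂ → ℂ} {U : Set ℂ}
    (hU : IsOpen U) (hUc : IsPreconnected U) (hUb : IsBounded U) (hF : DiffContOnCl ℂ F U)
    (hre : ∀ z ∈ frontier U, (F z).re = 0) :
    ∃ κ : ℝ, EqOn F (fun _ => κ * I) (closure U) := by
  obtain ⟨κ, hκ⟩ := exists_eqOn_const_ofReal_mul_I_of_re_eq_zero hU hUc hF.differentiableOn
    fun z hz => re_eq_zero_of_diffContOnCl hUb hF hre (subset_closure hz)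
  exact ⟨κ, EqOn.of_subset_closure hκ hF.continuousOn continuousOn_const subset_closure
    subset_rfl⟩

theorem re_div_sub_conj_mul_eq_zero {l ζ : ℂ} (hζ : ‖ζ‖ = 1) :
    (l / ζ - conj l * ζ).re = 0 := by
  have : conj l * ζ = conj (l * conj ζ) := by simp
  rw [div_eq_mul_inv, inv_eq_conj hζ, this, sub_conj]
  simp

end Complex

/-- **Boundary-value lemma (from the proof of Lemma 4.1).** If `a` is holomorphic on the
punctured unit disk, continuous on the punctured closed disk, `ζ·a(ζ)` has a finite limit as
`ζ → 0`, and `Re a = 0` on the unit circle, then `a(ζ) = λ/ζ + i·κ − λ̄·ζ` for some `λ ∈ ℂ`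
and `κ ∈ ℝ`. -/
theorem statement2 (a : ℂ → ℂ)
    (hhol : DifferentiableOn ℂ a (Metric.ball (0 : ℂ) 1 \ {0}))
    (hcont : ContinuousOn a (Metric.closedBall (0 : ℂ) 1 \ {0}))
    (hlim : ∃ L : ℂ, Filter.Tendsto (fun ζ => ζ * a ζ)
      (nhdsWithin 0 (Metric.ball (0 : ℂ) 1 \ {0})) (nhds L))
    (hbdry : ∀ ζ : ℂ, ‖ζ‖ = 1 → (a ζ).re = 0) :
    ∃ (l : ℂ) (κ : ℝ), ∀ ζ ∈ Metric.closedBall (0 : ℂ) 1 \ {0},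
      a ζ = l / ζ + Complex.I * (κ : ℂ) - (starRingEnd ℂ) l * ζ := by
  obtain ⟨L, hL⟩ := hlim
  have hL' : Tendsto (fun ζ => (ζ - 0) • a ζ) (𝓝[≠] 0) (𝓝 L) := by
    have : 𝓝[≠] (0 : ℂ) = 𝓝[ball 0 1 \ {0}] 0 := by
      rw [sdiff_eq, inter_comm]
      exact nhdsWithin_restrict' _ (ball_mem_nhds 0 one_pos)
    simpa [this] using hL
  obtain ⟨g, hgd, hg⟩ :=
    Complex.exists_differentiableOn_eq_sub_inv_smul_of_tendsto (ball_mem_nhds 0 one_pos) hhol hL'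
  set F : ℂ → ℂ := fun ζ => g ζ + conj L * ζ
  have hF : ∀ ζ ≠ 0, F ζ = a ζ - (L / ζ - conj L * ζ) := fun ζ hζ => by
    simp only [F, hg ζ hζ, sub_zero, smul_eq_mul, div_eq_inv_mul]
    ring
  have hFd : DifferentiableOn ℂ F (ball 0 1) := hgd.add (differentiableOn_id.const_mul _)
  have hFc : ContinuousOn F (closedBall 0 1) := by
    refine ContinuousOn.of_sdiff_singleton_of_continuousAt ?_
      (hFd.differentiableAt (ball_mem_nhds 0 one_pos)).continuousAt
    exact (hcont.sub ((continuousOn_const.div continuousOn_id fun ζ hζ => hζ.2).sub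
      (continuousOn_const.mul continuousOn_id))).congr fun ζ hζ => hF ζ hζ.2
  obtain ⟨κ, hκ⟩ := Complex.exists_eqOn_closure_const_ofReal_mul_I_of_re_eq_zero_on_frontier
    isOpen_ball (convex_ball 0 1).isPreconnected isBounded_ball
    ⟨hFd, by rw [closure_ball 0 one_ne_zero]; exact hFc⟩ fun ζ hζ => by
      rw [frontier_ball 0 one_ne_zero, mem_sphere_zero_iff_norm] at hζ
      rw [hF ζ (norm_ne_zero_iff.1 (hζ ▸ one_ne_zero)), Complex.sub_re, hbdry ζ hζ,
        Complex.re_div_sub_conj_mul_eq_zero hζ, sub_zero]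
  refine ⟨L, κ, fun ζ hζ => ?_⟩
  have hFζ : F ζ = κ * Complex.I := hκ (by rw [closure_ball 0 one_ne_zero]; exact hζ.1)
  rw [hF ζ hζ.2] at hFζ
  linear_combination hFζ
end

section
/- (Formula for J − J_st in terms of a deformation tensor, from Step 1 of the proof of Theorem 2.7.) Assume that id_Q − ψ∘φ : Q → Q is bijective, so that P × Q = Γ_ψ ⊕ Γ_φ. Let J : P × Q → P × Q be the unique ℂ-linear map equal to multiplication by i on Γ_ψ and to multiplication by −i on Γ_φ, and let J_st(p,q) = (i·p, −i·q). Then for all p ∈ P and q ∈ Q: (J − J_st)(p, 0) = 2i·(φ(r), r) where r = (id_Q − ψ∘φ)⁻¹(ψ(p)), and (J − J_st)(0, q) = −2i·(φ(s), ψ(φ(s))) where s = (id_Q − ψ∘φ)⁻¹(q). -/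
/-!
Both graphs are eigenspaces of `J`, so `J` is computed on `(p, 0)` and `(0, q)` by splitting them
along `Γ_ψ ⊕ Γ_φ`. If `r - ψ (φ r) = ψ p` then `(p, 0) = (p + φ r, ψ (p + φ r)) - (φ r, r)`, and if
`s - ψ (φ s) = q` then `(0, q) = (φ s, s) - (φ s, ψ (φ s))`. Of the eigenvalues `i` and `-i`, only
their difference `2i` survives in `J - J_st`.
-/

section GraphSplitting

variable {R P Q : Type*} [CommRing R] [AddCommGroup P] [Module R P] [AddCommGroup Q] [Module R Q]
  {φ : Q →ₗ[R] P} {ψ : P →ₗ[R] Q}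

theorem prod_mk_zero_eq_graph_sub_graph {p : P} {r : Q} (hr : r - ψ (φ r) = ψ p) :
    ((p, 0) : P × Q) = (p + φ r, ψ (p + φ r)) - (φ r, r) := by
  ext
  · simp
  · simp only [Prod.snd_sub, map_add, ← hr]
    abel

theorem prod_zero_mk_eq_graph_sub_graph {q s : Q} (hs : s - ψ (φ s) = q) :
    (((0 : P), q) : P × Q) = (φ s, s) - (φ s, ψ (φ s)) := by
  ext
  · simp
  · simp [← hs]

variable {J : (P × Q) →ₗ[R] (P × Q)} {a b : R}

theorem apply_mk_zero_sub_of_graph_eigen (hJψ : ∀ p, J (p, ψ p) = a • ((p, ψ p) : P × Q))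
    (hJφ : ∀ q, J (φ q, q) = b • ((φ q, q) : P × Q)) {p : P} {r : Q}
    (hr : r - ψ (φ r) = ψ p) :
    J (p, 0) - ((a • p, 0) : P × Q) = (a - b) • ((φ r, r) : P × Q) := by
  rw [prod_mk_zero_eq_graph_sub_graph hr, map_sub, hJψ, hJφ]
  ext
  · simp only [Prod.fst_sub, Prod.smul_fst]
    module
  · simp only [Prod.snd_sub, Prod.smul_snd, map_add, ← sub_eq_iff_eq_add.mp hr]
    module

theorem apply_zero_mk_sub_of_graph_eigen (hJψ : ∀ p, J (p, ψ p) = a • ((p, ψ p) : P × Q))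
    (hJφ : ∀ q, J (φ q, q) = b • ((φ q, q) : P × Q)) {q s : Q}
    (hs : s - ψ (φ s) = q) :
    J (0, q) - (((0 : P), b • q) : P × Q) = (b - a) • ((φ s, ψ (φ s)) : P × Q) := by
  rw [prod_zero_mk_eq_graph_sub_graph hs, map_sub, hJφ, hJψ, ← hs]
  ext
  · simp only [Prod.fst_sub, Prod.smul_fst]
    module
  · simp only [Prod.snd_sub, Prod.smul_snd]
    module

end GraphSplitting

theorem statement7_general {P Q : Type*} [AddCommGroup P] [Module ℂ P] [AddCommGroup Q] [Module ℂ Q]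
    (φ : Q →ₗ[ℂ] P) (ψ : P →ₗ[ℂ] Q)
    (J : (P × Q) →ₗ[ℂ] (P × Q))
    (hJψ : ∀ p : P, J (p, ψ p) = Complex.I • ((p, ψ p) : P × Q))
    (hJφ : ∀ q : Q, J (φ q, q) = (-Complex.I) • ((φ q, q) : P × Q)) :
    (∀ (p : P) (r : Q), (LinearMap.id - ψ ∘ₗ φ : Q →ₗ[ℂ] Q) r = ψ p →
        J (p, 0) - ((Complex.I • p, 0) : P × Q)
          = (((2 * Complex.I) • φ r, (2 * Complex.I) • r) : P × Q))
    ∧ ∀ (q s : Q), (LinearMap.id - ψ ∘ₗ φ : Q →ₗ[ℂ] Q) s = q →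
        J (0, q) - ((0, (-Complex.I) • q) : P × Q)
          = (((-(2 * Complex.I)) • φ s, (-(2 * Complex.I)) • ψ (φ s)) : P × Q) := by
  constructor
  · intro p r hr
    rw [apply_mk_zero_sub_of_graph_eigen (r := r) hJψ hJφ hr,
      show Complex.I - -Complex.I = 2 * Complex.I by ring, Prod.smul_mk]
  · intro q s hs
    rw [apply_zero_mk_sub_of_graph_eigen (s := s) hJψ hJφ hs,
      show -Complex.I - Complex.I = -(2 * Complex.I) by ring, Prod.smul_mk]

/-- **Formula for `J − J_st` in terms of a deformation tensor (Step 1 of the proof of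
Theorem 2.7).** Let `φ : Q → P`, `ψ : P → Q` be `ℂ`-linear with `id_Q − ψ∘φ` bijective, and
let `J : P × Q → P × Q` be the `ℂ`-linear map equal to multiplication by `i` on
`Γ_ψ = {(p, ψ(p))}` and by `−i` on `Γ_φ = {(φ(q), q)}`, while `J_st(p,q) = (i·p, −i·q)`. Then
`(J − J_st)(p,0) = 2i·(φ(r), r)` for `r = (id_Q − ψ∘φ)⁻¹(ψ(p))`, and
`(J − J_st)(0,q) = −2i·(φ(s), ψ(φ(s)))` for `s = (id_Q − ψ∘φ)⁻¹(q)`. -/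
theorem statement7 {P Q : Type*} [AddCommGroup P] [Module ℂ P] [AddCommGroup Q] [Module ℂ Q]
    (φ : Q →ₗ[ℂ] P) (ψ : P →ₗ[ℂ] Q)
    (h : Function.Bijective ((LinearMap.id - ψ ∘ₗ φ : Q →ₗ[ℂ] Q) : Q → Q))
    (J : (P × Q) →ₗ[ℂ] (P × Q))
    (hJψ : ∀ p : P, J (p, ψ p) = Complex.I • ((p, ψ p) : P × Q))
    (hJφ : ∀ q : Q, J (φ q, q) = (-Complex.I) • ((φ q, q) : P × Q)) :
    (∀ (p : P) (r : Q), (LinearMap.id - ψ ∘ₗ φ : Q →ₗ[ℂ] Q) r = ψ p →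
        J (p, 0) - ((Complex.I • p, 0) : P × Q)
          = (((2 * Complex.I) • φ r, (2 * Complex.I) • r) : P × Q))
    ∧ ∀ (q s : Q), (LinearMap.id - ψ ∘ₗ φ : Q →ₗ[ℂ] Q) s = q →
        J (0, q) - ((0, (-Complex.I) • q) : P × Q)
          = (((-(2 * Complex.I)) • φ s, (-(2 * Complex.I)) • ψ (φ s)) : P × Q) :=
  statement7_general φ ψ J hJψ hJφ
end
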